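/- arXiv:0803.2320 — 2 statements merged into one kernel-verified Lean document; each statement's English description precedes it below -/
import Mathlib

section
/- Let X be a compact Hausdorff G-space (G a topological group acting continuously) and suppose every element p of the enveloping semigroup E(X) ⊆ X^X is a fragmented self-map of X. Then every factor (continuous equivariant image) Y of X has the same property: every element of E(Y) is a fragmented self-map of Y. -/
/-- A map `f : X → Z` from a topological space to a uniform space is *fragmented* if for
every nonempty subset `A` of `X` and every entourage `ε` of `Z` there is an open set `O`
such that `O ∩ A` is nonempty and `f (O ∩ A)` is `ε`-small. -/
def Fragmented {X Z : Type*} [TopologicalSpace X] [UniformSpace Z] (f : X → Z) : Prop :=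
  ∀ A : Set X, A.Nonempty → ∀ ε ∈ uniformity Z, ∃ O : Set X, IsOpen O ∧ (O ∩ A).Nonempty ∧
    ∀ x ∈ O ∩ A, ∀ y ∈ O ∩ A, (f x, f y) ∈ ε

/-- The enveloping semigroup `E(X)` of a compact `G`-space: the pointwise closure in
`X^X` of the set of translations `x ↦ g • x`. -/
def EnvelopingSemigroup (G X : Type*) [TopologicalSpace X] [SMul G X] : Set (X → X) :=
  closure {f : X → X | ∃ g : G, f = fun x => g • x}

/-!
A factor map `α : X → Y` lifts every `p ∈ E(Y)` to some `q ∈ E(X)` with `α ∘ q = p ∘ α`,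
because `E(X)` is compact and the translations of `Y` lift to those of `X`; so `p ∘ α` is
fragmented. To push fragmentability down along `α`, replace a set `A ⊆ Y` by a minimal closed
set `B ⊆ X` with `α '' B = closure A`. Minimality means that `α` cannot map `B \ O` onto
`closure A` for any open `O` meeting `B`, so the open set `(α '' (B \ O))ᶜ` meets `A`, and its
trace on `A` lies in `α '' (O ∩ B)`: an open piece of `B` on which `p ∘ α` is small yields an
open piece of `A` on which `p` is small.
-/

open Set Function

section MinimalClosedLift

variable {X Y : Type*} [TopologicalSpace X] [CompactSpace X] [TopologicalSpace Y]
  {α : X → Y}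

lemma image_sInter_eq_of_isChain [T1Space Y] (hα : Continuous α) {A : Set Y}
    {c : Set (Set X)} (hc : IsChain (· ⊆ ·) c) (hcne : c.Nonempty)
    (hcl : ∀ B ∈ c, IsClosed B) (himg : ∀ B ∈ c, α '' B = A) :
    α '' ⋂₀ c = A := by
  obtain ⟨B₀, hB₀⟩ := hcne
  refine (image_mono (sInter_subset_of_mem hB₀)).trans (himg B₀ hB₀).le |>.antisymm ?_
  intro y hy
  have hfiber_closed : ∀ B ∈ c, IsClosed (B ∩ α ⁻¹' {y}) := fun B hB =>
    (hcl B hB).inter (isClosed_singleton.preimage hα)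
  obtain ⟨x, hx⟩ : (⋂ B : c, (B : Set X) ∩ α ⁻¹' {y}).Nonempty := by
    have : Nonempty c := ⟨⟨B₀, hB₀⟩⟩
    refine IsCompact.nonempty_iInter_of_directed_nonempty_isCompact_isClosed _ ?_
      (fun B => ?_) (fun B => (hfiber_closed B B.2).isCompact) (fun B => hfiber_closed B B.2)
    · intro B₁ B₂
      rcases hc.total B₁.2 B₂.2 with h | h
      · exact ⟨B₁, subset_rfl, inter_subset_inter_left _ h⟩
      · exact ⟨B₂, inter_subset_inter_left _ h, subset_rfl⟩
    · obtain ⟨x, hxB, rfl⟩ := (himg B B.2).symm ▸ hy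
      exact ⟨x, hxB, rfl⟩
  rw [mem_iInter] at hx
  exact ⟨x, mem_sInter.mpr fun B hB => (hx ⟨B, hB⟩).1, (hx ⟨B₀, hB₀⟩).2⟩

lemma exists_minimal_isClosed_image_eq [T1Space Y] (hα : Continuous α) {A : Set Y}
    (hA : IsClosed A) (hAα : A ⊆ range α) :
    ∃ B, Minimal (fun B => IsClosed B ∧ α '' B = A) B := by
  obtain ⟨B, -, hB⟩ := zorn_superset_nonempty {B | IsClosed B ∧ α '' B = A}
    (fun c hc hchain hcne => ⟨⋂₀ c,
      ⟨isClosed_sInter fun B hB => (hc hB).1,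
        image_sInter_eq_of_isChain hα hchain hcne (fun B hB => (hc hB).1)
          fun B hB => (hc hB).2⟩,
      fun _ => sInter_subset_of_mem⟩)
    (α ⁻¹' A) ⟨hA.preimage hα, image_preimage_eq_of_subset hAα⟩
  exact ⟨B, hB⟩

lemma exists_isOpen_inter_subset_image_of_minimal [T2Space Y] (hα : Continuous α)
    {A : Set Y} {B : Set X} (hB : Minimal (fun B => IsClosed B ∧ α '' B = closure A) B)
    {O : Set X} (hO : IsOpen O) (hOB : (O ∩ B).Nonempty) :
    ∃ U, IsOpen U ∧ (U ∩ A).Nonempty ∧ U ∩ A ⊆ α '' (O ∩ B) := by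
  obtain ⟨⟨hBcl, hBA⟩, hBmin⟩ := hB
  have hCcl : IsClosed (B \ O) := hBcl.sdiff hO
  have hCsub : α '' (B \ O) ⊆ closure A := hBA ▸ image_mono sdiff_subset
  have hCne : α '' (B \ O) ≠ closure A := fun h => by
    obtain ⟨x, hxO, hxB⟩ := hOB
    exact (hBmin ⟨hCcl, h⟩ sdiff_subset hxB).2 hxO
  obtain ⟨y, hyA, hyC⟩ := exists_of_ssubset (hCsub.ssubset_of_ne hCne)
  have hU : IsOpen (α '' (B \ O))ᶜ := (hCcl.isCompact.image hα).isClosed.isOpen_compl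
  refine ⟨_, hU, mem_closure_iff.mp hyA _ hU hyC, ?_⟩
  rintro _ ⟨hyU, hyA⟩
  obtain ⟨x, hxB, rfl⟩ := hBA.symm ▸ subset_closure hyA
  exact ⟨x, ⟨by_contra fun hxO => hyU ⟨x, ⟨hxB, hxO⟩, rfl⟩, hxB⟩, rfl⟩

end MinimalClosedLift

section Fragmented

variable {X Y Z W : Type*} [TopologicalSpace X] [UniformSpace Z]

lemma Fragmented.uniformContinuous_comp [UniformSpace W] {f : X → Z} {φ : Z → W}
    (hf : Fragmented f) (hφ : UniformContinuous φ) : Fragmented (φ ∘ f) := fun A hA _ hε =>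
  hf A hA _ (hφ hε)

lemma Fragmented.of_comp_surjective [CompactSpace X] [TopologicalSpace Y] [T2Space Y]
    {α : X → Y} (hα : Continuous α) (hαs : Surjective α) {p : Y → Z}
    (hp : Fragmented (p ∘ α)) : Fragmented p := by
  intro A hA ε hε
  obtain ⟨B, hB⟩ := exists_minimal_isClosed_image_eq hα isClosed_closure
    (hαs.range_eq ▸ subset_univ _)
  have hBne : B.Nonempty := by
    obtain ⟨x, hx, -⟩ := hB.prop.2.symm ▸ subset_closure hA.some_mem
    exact ⟨x, hx⟩
  obtain ⟨O, hO, hOB, hsmall⟩ := hp B hBne ε hε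
  obtain ⟨U, hU, hUA, hUsub⟩ := exists_isOpen_inter_subset_image_of_minimal hα hB hO hOB
  refine ⟨U, hU, hUA, fun y hy y' hy' => ?_⟩
  obtain ⟨x, hx, rfl⟩ := hUsub hy
  obtain ⟨x', hx', rfl⟩ := hUsub hy'
  exact hsmall x hx x' hx'

end Fragmented

lemma exists_mem_envelopingSemigroup_comp_eq {G X Y : Type*} [TopologicalSpace X]
    [CompactSpace X] [TopologicalSpace Y] [T2Space Y] [SMul G X] [SMul G Y] {α : X → Y}
    (hα : Continuous α) (hαG : ∀ (g : G) (x : X), α (g • x) = g • α x) {p : Y → Y}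
    (hp : p ∈ EnvelopingSemigroup G Y) :
    ∃ q ∈ EnvelopingSemigroup G X, α ∘ q = p ∘ α := by
  have hpush : Continuous fun q : X → X => α ∘ q :=
    continuous_pi fun x => hα.comp (continuous_apply x)
  have hpull : Continuous fun p : Y → Y => p ∘ α := continuous_pi fun x => continuous_apply (α x)
  have hK : IsClosed ((α ∘ ·) '' EnvelopingSemigroup G X) :=
    (isClosed_closure.isCompact.image hpush).isClosed
  have htranslations : (· ∘ α) '' {f : Y → Y | ∃ g : G, f = fun y => g • y} ⊆
      (α ∘ ·) '' EnvelopingSemigroup G X := by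
    rintro _ ⟨_, ⟨g, rfl⟩, rfl⟩
    exact ⟨fun x => g • x, subset_closure ⟨g, rfl⟩, funext (hαG g)⟩
  obtain ⟨q, hq, hqp⟩ :=
    closure_minimal htranslations hK (image_closure_subset_closure_image hpull ⟨p, hp, rfl⟩)
  exact ⟨q, hq, hqp⟩

theorem tame_factor_general {G X Y : Type*} [Group G]
    [UniformSpace X] [CompactSpace X] [MulAction G X]
    [UniformSpace Y] [T2Space Y] [MulAction G Y]
    (hX : ∀ p ∈ EnvelopingSemigroup G X, Fragmented p)
    (α : X → Y) (hαc : Continuous α) (hαs : Function.Surjective α)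
    (hαG : ∀ (g : G) (x : X), α (g • x) = g • α x) :
    ∀ p ∈ EnvelopingSemigroup G Y, Fragmented p := by
  intro p hp
  obtain ⟨q, hq, hqp⟩ := exists_mem_envelopingSemigroup_comp_eq hαc hαG hp
  refine Fragmented.of_comp_surjective hαc hαs ?_
  rw [← hqp]
  exact (hX q hq).uniformContinuous_comp (CompactSpace.uniformContinuous_of_continuous hαc)

/-- If every element of the enveloping semigroup of a compact Hausdorff `G`-space `X` is
a fragmented self-map (i.e. `X` is tame) and `α : X → Y` is a factor map (a continuous
surjective `G`-map onto a compact Hausdorff `G`-space `Y`), then every element of the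
enveloping semigroup of `Y` is a fragmented self-map (i.e. `Y` is tame). -/
theorem tame_factor {G X Y : Type*} [Group G] [TopologicalSpace G]
    [UniformSpace X] [CompactSpace X] [T2Space X] [MulAction G X] [ContinuousSMul G X]
    [UniformSpace Y] [CompactSpace Y] [T2Space Y] [MulAction G Y] [ContinuousSMul G Y]
    (hX : ∀ p ∈ EnvelopingSemigroup G X, Fragmented p)
    (α : X → Y) (hαc : Continuous α) (hαs : Function.Surjective α)
    (hαG : ∀ (g : G) (x : X), α (g • x) = g • α x) :
    ∀ p ∈ EnvelopingSemigroup G Y, Fragmented p :=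
  tame_factor_general hX α hαc hαs hαG
end

section
/- Let (X_i) be a family of compact Hausdorff G-spaces such that for each i every element of the enveloping semigroup E(X_i) is a fragmented self-map of X_i. Then the product G-space X = ∏ X_i has the same property: every element of E(X) is a fragmented self-map of X. (In other words, a product of tame G-systems is tame.) -/
open Filter Uniformity

section Fragmented

variable {X Y Z : Type*} [TopologicalSpace X]

def fragmentationFilter (f : X → Z) : Filter (Z × Z) where
  sets := {ε | ∀ A : Set X, A.Nonempty → ∃ O : Set X, IsOpen O ∧ (O ∩ A).Nonempty ∧
    ∀ x ∈ O ∩ A, ∀ y ∈ O ∩ A, (f x, f y) ∈ ε}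
  univ_sets A hA := ⟨Set.univ, isOpen_univ, by simpa using hA, by simp⟩
  sets_of_superset hε hεδ A hA := by
    obtain ⟨O, hO, hOA, hsmall⟩ := hε A hA
    exact ⟨O, hO, hOA, fun x hx y hy => hεδ (hsmall x hx y hy)⟩
  inter_sets {ε δ} hε hδ A hA := by
    obtain ⟨O, hO, hOA, hεsmall⟩ := hε A hA
    obtain ⟨O', hO', hO'A, hδsmall⟩ := hδ (O ∩ A) hOA
    refine ⟨O' ∩ O, hO'.inter hO, by rwa [Set.inter_assoc], fun x hx y hy => ?_⟩
    rw [Set.inter_assoc] at hx hy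
    exact ⟨hεsmall x hx.2 y hy.2, hδsmall x hx y hy⟩

theorem fragmented_iff_fragmentationFilter_le [UniformSpace Z] {f : X → Z} :
    Fragmented f ↔ fragmentationFilter f ≤ 𝓤 Z :=
  ⟨fun hf _ hε A hA => hf A hA _ hε, fun hf A hA _ hε => hf hε A hA⟩

theorem Fragmented.comp_continuous [TopologicalSpace Y] [UniformSpace Z] {f : Y → Z}
    (hf : Fragmented f) {α : X → Y} (hα : Continuous α) : Fragmented (f ∘ α) := by
  intro A hA ε hε
  obtain ⟨O, hO, hOA, hsmall⟩ := hf (α '' A) (hA.image α) ε hε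
  refine ⟨α ⁻¹' O, hO.preimage hα, ?_, fun x hx y hy => hsmall _ ?_ _ ?_⟩
  · obtain ⟨_, hzO, x, hxA, rfl⟩ := hOA
    exact ⟨x, hzO, hxA⟩
  · exact ⟨hx.1, x, hx.2, rfl⟩
  · exact ⟨hy.1, y, hy.2, rfl⟩

theorem fragmented_pi_iff {ι : Type*} {Z : ι → Type*} [∀ i, UniformSpace (Z i)]
    {f : X → ∀ i, Z i} : Fragmented f ↔ ∀ i, Fragmented fun x => f x i := by
  simp only [fragmented_iff_fragmentationFilter_le, Pi.uniformity, le_iInf_iff,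
    ← map_le_iff_le_comap]
  rfl

end Fragmented

section EnvelopingSemigroup

variable {G X Y : Type*} [TopologicalSpace X] [TopologicalSpace Y] [SMul G X] [SMul G Y]

theorem exists_mem_envelopingSemigroup_comp_eq_comp [T2Space Y] {α : X → Y}
    (hα : Continuous α) (hα_smul : ∀ (g : G) x, α (g • x) = g • α x)
    (hα_surj : Function.Surjective α) {p : X → X} (hp : p ∈ EnvelopingSemigroup G X) :
    ∃ q ∈ EnvelopingSemigroup G Y, α ∘ p = q ∘ α := by
  set s := Function.surjInv hα_surj
  have hαs : Function.RightInverse s α := Function.rightInverse_surjInv hα_surj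
  refine ⟨α ∘ p ∘ s, ?_, funext fun x => ?_⟩
  · refine map_mem_closure (f := fun f => α ∘ f ∘ s) ?_ hp ?_
    · exact continuous_pi fun y => hα.comp (continuous_apply (s y))
    · rintro _ ⟨g, rfl⟩
      exact ⟨g, funext fun y => by simp [hα_smul, hαs y]⟩
  · have hclosed : IsClosed {f : X → X | α (f x) = α (f (s (α x)))} :=
      isClosed_eq (hα.comp (continuous_apply x)) (hα.comp (continuous_apply (s (α x))))
    refine closure_minimal ?_ hclosed hp
    rintro _ ⟨g, rfl⟩
    simp [hα_smul, hαs (α x)]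

theorem exists_mem_envelopingSemigroup_apply_eq {ι : Type*} {X : ι → Type*}
    [∀ i, TopologicalSpace (X i)] [∀ i, T2Space (X i)] [∀ i, SMul G (X i)]
    [Nonempty (∀ i, X i)] (i : ι) {p : (∀ i, X i) → ∀ i, X i}
    (hp : p ∈ EnvelopingSemigroup G (∀ i, X i)) :
    ∃ q ∈ EnvelopingSemigroup G (X i), (fun x => p x i) = q ∘ Function.eval i := by
  classical
  have hsurj : Function.Surjective (Function.eval i : (∀ i, X i) → X i) := fun y =>
    ⟨Function.update (Classical.arbitrary _) i y, Function.update_self ..⟩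
  exact exists_mem_envelopingSemigroup_comp_eq_comp (continuous_apply i) (fun _ _ => rfl)
    hsurj hp

end EnvelopingSemigroup

theorem tame_prod_general {G : Type*} {ι : Type*} {X : ι → Type*} [Group G]
    [∀ i, UniformSpace (X i)] [∀ i, T2Space (X i)]
    [∀ i, MulAction G (X i)]
    (hX : ∀ i, ∀ p ∈ EnvelopingSemigroup G (X i), Fragmented p) :
    ∀ p ∈ EnvelopingSemigroup G (∀ i, X i), Fragmented p := by
  intro p hp
  refine fragmented_pi_iff.2 fun i A hA => ?_
  have : Nonempty (∀ i, X i) := ⟨hA.some⟩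
  obtain ⟨q, hq, hpq⟩ := exists_mem_envelopingSemigroup_apply_eq i hp
  rw [hpq]
  exact (hX i q hq).comp_continuous (continuous_apply i) A hA

/-- A product of tame compact Hausdorff `G`-systems is tame: if every element of each
`E(X i)` is a fragmented self-map, then every element of the enveloping semigroup of the
product `∏ i, X i` (with the diagonal action) is a fragmented self-map. -/
theorem tame_prod {G : Type*} {ι : Type*} {X : ι → Type*} [Group G] [TopologicalSpace G]
    [∀ i, UniformSpace (X i)] [∀ i, CompactSpace (X i)] [∀ i, T2Space (X i)]
    [∀ i, MulAction G (X i)] [∀ i, ContinuousSMul G (X i)]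
    (hX : ∀ i, ∀ p ∈ EnvelopingSemigroup G (X i), Fragmented p) :
    ∀ p ∈ EnvelopingSemigroup G (∀ i, X i), Fragmented p :=
  tame_prod_general hX
end
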